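/- If ψ has a 1-in-3 satisfying assignment, then there exists a graph H with exactly 2m+1 vertices and 5m edges that appears as a 2-subdivision in G₂(ψ); in particular, G₂(ψ) has a topological minor at depth 1 of density 5m/(2m+1). -/

import Mathlib

/-- The density `‖G‖/|G|` of a finite simple graph. -/
noncomputable def graphDensity {V : Type*} (G : SimpleGraph V) : ℚ :=
  (G.edgeSet.ncard : ℚ) / (Nat.card V : ℚ)

/-- A model of a topological minor `H` inside `G`: an injective nail map together
with, for every edge of `H`, a path in `G` between the corresponding nails; the
paths are pairwise internally disjoint and their internal vertices avoid the nails. -/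
structure SubdivModel {VH VG : Type*} (H : SimpleGraph VH) (G : SimpleGraph VG) where
  nail : VH → VG
  nail_inj : Function.Injective nail
  path : ∀ u v : VH, H.Adj u v → G.Walk (nail u) (nail v)
  path_isPath : ∀ u v (h : H.Adj u v), (path u v h).IsPath
  path_symm : ∀ u v (h : H.Adj u v), path v u h.symm = (path u v h).reverse
  internal_not_nail : ∀ u v (h : H.Adj u v), ∀ w ∈ (path u v h).support,
    w ≠ nail u → w ≠ nail v → ∀ x, w ≠ nail x
  paths_disjoint : ∀ u v (h : H.Adj u v), ∀ u' v' (h' : H.Adj u' v'),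
    s(u, v) ≠ s(u', v') → ∀ w, w ∈ (path u v h).support → w ∈ (path u' v' h').support →
      (w = nail u ∨ w = nail v) ∧ (w = nail u' ∨ w = nail v')

/-- `H` appears as a `k`-subdivision in `G`: the graph obtained from `H` by
subdividing every edge exactly `k` times is isomorphic to a subgraph of `G`,
i.e. there is a model all of whose paths have length exactly `k + 1`. -/
def AppearsAsSubdivision (k : ℕ) {VH VG : Type*} (H : SimpleGraph VH) (G : SimpleGraph VG) :
    Prop :=
  ∃ M : SubdivModel H G, ∀ u v (h : H.Adj u v), (M.path u v h).length = k + 1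

/-- `H` is an `r/2`-shallow topological minor of `G`: a graph obtained from `H` by
subdividing each edge at most `r` times is isomorphic to a subgraph of `G`,
i.e. there is a model all of whose paths have length at most `r + 1`. -/
def IsShallowTopMinor (r : ℕ) {VH VG : Type*} (H : SimpleGraph VH) (G : SimpleGraph VG) :
    Prop :=
  ∃ M : SubdivModel H G, ∀ u v (h : H.Adj u v), (M.path u v h).length ≤ r + 1

/-- A CNF formula with `m` clauses over `p` (positive) variables, each clause consisting
of exactly three distinct positive literals and every variable occurring in at least
three clauses. -/
structure PosCnf (p m : ℕ) where
  clause : Fin m → Finset (Fin p)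
  card_eq : ∀ i, (clause i).card = 3
  freq : ∀ v : Fin p, 3 ≤ (Finset.univ.filter (fun i => v ∈ clause i)).card

/-- `σ` is a 1-in-3 satisfying assignment for `ψ`: every clause contains exactly one
true variable. -/
def PosCnf.Sat1in3 {p m : ℕ} (ψ : PosCnf p m) (σ : Fin p → Bool) : Prop :=
  ∀ i, ((ψ.clause i).filter (fun v => σ v = true)).card = 1

/-- Occurrences of variables in clauses of `ψ`. -/
def PosCnf.Occ {p m : ℕ} (ψ : PosCnf p m) : Type :=
  {q : Fin m × Fin p // q.2 ∈ ψ.clause q.1}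

/-- `succ` arranges, for each variable, its occurrences into a single cycle: it is a
permutation of occurrences preserving the variable whose restriction to the
occurrences of each variable is one cycle. -/
def CycleData {p m : ℕ} (ψ : PosCnf p m) (succ : Equiv.Perm ψ.Occ) : Prop :=
  (∀ o : ψ.Occ, (succ o).1.2 = o.1.2) ∧
  (∀ o o' : ψ.Occ, o.1.2 = o'.1.2 → succ.SameCycle o o')
/-- Vertices of the graph `G₂(ψ)`: `none` is the apex `a`; `some (inl o)` is the white
vertex of the occurrence `o`; `some (inr (inl o))` is the gray triangle vertex attached
to the white vertex of `o`; `some (inr (inr (o, true, k)))` (`k = 0, 1`) are the two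
black vertices subdividing the apex–white(`o`) edge (with `k = 0` next to the apex);
`some (inr (inr (o, false, k)))` are the two black vertices subdividing the cycle edge
from white(`o`) to white(`succ o`). -/
def G2PsiV {p m : ℕ} (ψ : PosCnf p m) : Type :=
  Option (ψ.Occ ⊕ ψ.Occ ⊕ ψ.Occ × Bool × Fin 2)

/-- The graph `G₂(ψ)` of the reduction (for `r` even, `r = 2`): variable cycles `D_i`
(one white vertex per occurrence), an apex `a` joined to all white vertices, every
cycle edge and apex edge subdivided exactly twice by black vertices, and one gray
triangle per clause, each triangle vertex joined to its corresponding white vertex. -/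
def G2Psi {p m : ℕ} (ψ : PosCnf p m) (succ : Equiv.Perm ψ.Occ) : SimpleGraph (G2PsiV ψ) :=
  SimpleGraph.fromRel (fun x y =>
    -- apex — first black vertex of the apex edge at o
    (∃ o : ψ.Occ, x = none ∧ y = some (Sum.inr (Sum.inr (o, true, 0)))) ∨
    -- the two black vertices of the apex edge at o
    (∃ o : ψ.Occ, x = some (Sum.inr (Sum.inr (o, true, 0))) ∧
      y = some (Sum.inr (Sum.inr (o, true, 1)))) ∨
    -- second black vertex of the apex edge at o — white(o)
    (∃ o : ψ.Occ, x = some (Sum.inr (Sum.inr (o, true, 1))) ∧ y = some (Sum.inl o)) ∨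
    -- white(o) — first black vertex of the cycle edge (o, succ o)
    (∃ o : ψ.Occ, x = some (Sum.inl o) ∧ y = some (Sum.inr (Sum.inr (o, false, 0)))) ∨
    -- the two black vertices of the cycle edge (o, succ o)
    (∃ o : ψ.Occ, x = some (Sum.inr (Sum.inr (o, false, 0))) ∧
      y = some (Sum.inr (Sum.inr (o, false, 1)))) ∨
    -- second black vertex of the cycle edge (o, succ o) — white(succ o)
    (∃ o : ψ.Occ, x = some (Sum.inr (Sum.inr (o, false, 1))) ∧
      y = some (Sum.inl (succ o))) ∨
    -- gray triangle vertex of o — white(o)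
    (∃ o : ψ.Occ, x = some (Sum.inr (Sum.inl o)) ∧ y = some (Sum.inl o)) ∨
    -- gray triangle edges: gray vertices of two occurrences in the same clause
    (∃ o o' : ψ.Occ, o.1.1 = o'.1.1 ∧
      x = some (Sum.inr (Sum.inl o)) ∧ y = some (Sum.inr (Sum.inl o'))))

/-!
Fix a 1-in-3 satisfying assignment `σ`. The nails of `H` are the apex and the white vertices
of the occurrences of false variables; since every clause has exactly two false literals there
are `2m` of the latter. The apex is joined to each of them along its subdivided apex edge; the
cycles `D_i` of the false variables are kept whole, each cycle edge becoming an edge of `H`; and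
the two false occurrences of a clause are joined through the two corresponding gray vertices of
its triangle. All these paths have length `3`, and each black or gray vertex lies on at most
one of them, which makes them internally disjoint.

Every variable occurs at least three times, so its cycle has length at least three; hence each
non-apex nail has four distinct neighbours in `H` (the apex, its two cycle neighbours and its
clause partner, which belongs to another variable), the apex has `2m`, and `H` has
`(2m + 4 · 2m) / 2 = 5m` edges.
-/

open Finset

theorem Equiv.Perm.SameCycle.eq_or_eq_apply_of_apply_apply_eq {α : Type*} {f : Equiv.Perm α}
    {x y : α} (h : f.SameCycle x y) (hx : f (f x) = x) : y = x ∨ y = f x := by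
  obtain ⟨n, rfl⟩ := h
  have hper : ∀ q : ℤ, (f ^ (2 * q)) x = x := fun q => by
    rw [zpow_mul]
    exact Equiv.Perm.zpow_apply_eq_self_of_apply_eq_self (by simpa [sq] using hx) q
  rcases Int.emod_two_eq_zero_or_one n with hn | hn <;>
    rw [← Int.emod_add_mul_ediv n 2, hn, zpow_add, Equiv.Perm.mul_apply, hper] <;> simp

section FiberPartner

variable {S ι : Type*} [Fintype S] [DecidableEq ι] {cl : S → ι}

theorem existsUnique_ne_of_card_fiber_eq_two (h : ∀ i, #{x | cl x = i} = 2) (a : S) :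
    ∃! b, b ≠ a ∧ cl b = cl a := by
  classical
  obtain ⟨b, hb⟩ : ∃ b, ({x | cl x = cl a} : Finset S).erase a = {b} :=
    card_eq_one.1 (by rw [card_erase_of_mem (by simp), h])
  have key : ∀ c, c ≠ a ∧ cl c = cl a ↔ c = b := by simpa [Finset.ext_iff] using hb
  exact ⟨b, (key b).2 rfl, fun c hc => (key c).1 hc⟩

noncomputable def fiberPartner (h : ∀ i, #{x | cl x = i} = 2) (a : S) : S :=
  (existsUnique_ne_of_card_fiber_eq_two h a).exists.choose

variable (h : ∀ i, #{x | cl x = i} = 2)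

theorem fiberPartner_ne (a : S) : fiberPartner h a ≠ a :=
  (existsUnique_ne_of_card_fiber_eq_two h a).exists.choose_spec.1

theorem fiberPartner_fiber (a : S) : cl (fiberPartner h a) = cl a :=
  (existsUnique_ne_of_card_fiber_eq_two h a).exists.choose_spec.2

theorem eq_fiberPartner_iff {a b : S} : b = fiberPartner h a ↔ b ≠ a ∧ cl b = cl a :=
  ⟨fun hb => hb ▸ ⟨fiberPartner_ne h a, fiberPartner_fiber h a⟩, fun hb =>
    (existsUnique_ne_of_card_fiber_eq_two h a).unique hb
      ⟨fiberPartner_ne h a, fiberPartner_fiber h a⟩⟩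

theorem fiberPartner_involutive : Function.Involutive (fiberPartner h) := fun a =>
  ((eq_fiberPartner_iff h).2 ⟨(fiberPartner_ne h a).symm, (fiberPartner_fiber h a).symm⟩).symm

end FiberPartner

namespace SimpleGraph

variable {S : Type*}

def apexCyclesMatching (f : Equiv.Perm S) (g : S → S) : SimpleGraph (Option S) :=
  fromRel fun u v => match u, v with
    | none, some _ => True
    | some a, some b => b = f a ∨ b = g a
    | _, _ => False

variable {f : Equiv.Perm S} {g : S → S}

theorem apexCyclesMatching_adj_none (a : S) : (apexCyclesMatching f g).Adj none (some a) := by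
  simp [apexCyclesMatching]

theorem apexCyclesMatching_adj_some_iff (hff : ∀ a, f (f a) ≠ a) (hg : ∀ a, g a ≠ a)
    (hgg : Function.Involutive g) {a b : S} :
    (apexCyclesMatching f g).Adj (some a) (some b) ↔ b = f a ∨ a = f b ∨ b = g a := by
  have hf : ∀ a, f a ≠ a := fun a h => hff a (by rw [h, h])
  simp only [apexCyclesMatching, fromRel_adj, ne_eq, Option.some.injEq]
  constructor
  · rintro ⟨-, (h | h) | (h | rfl)⟩
    · exact .inl h
    · exact .inr (.inr h)
    · exact .inr (.inl h)
    · exact .inr (.inr (hgg b).symm)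
  · rintro (rfl | rfl | rfl)
    · exact ⟨(hf a).symm, .inl (.inl rfl)⟩
    · exact ⟨hf b, .inr (.inl rfl)⟩
    · exact ⟨(hg a).symm, .inl (.inr rfl)⟩

variable [Fintype S]

theorem apexCyclesMatching_degree_none [DecidableRel (apexCyclesMatching f g).Adj] :
    (apexCyclesMatching f g).degree none = Fintype.card S := by
  have hnbr : (apexCyclesMatching f g).neighborFinset none = univ.map .some := by
    ext (_ | b) <;> simp [apexCyclesMatching_adj_none]
  rw [← card_neighborFinset_eq_degree, hnbr, card_map, card_univ]

theorem apexCyclesMatching_degree_some [DecidableRel (apexCyclesMatching f g).Adj]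
    (hff : ∀ a, f (f a) ≠ a) (hg : ∀ a, g a ≠ a) (hgg : Function.Involutive g)
    (hfg : ∀ a, f a ≠ g a) (hgf : ∀ a, f.symm a ≠ g a) (a : S) :
    (apexCyclesMatching f g).degree (some a) = 4 := by
  classical
  have hnbr : (apexCyclesMatching f g).neighborFinset (some a) =
      {none, some (f a), some (f.symm a), some (g a)} := by
    ext (_ | b)
    · simpa using (apexCyclesMatching_adj_none a).symm
    · simp [apexCyclesMatching_adj_some_iff hff hg hgg, Equiv.eq_symm_apply, eq_comm (a := a)]
  rw [← card_neighborFinset_eq_degree, hnbr, card_eq_four]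
  refine ⟨_, _, _, _, by simp, by simp, by simp, ?_, by simpa using hfg a,
    by simpa using hgf a, rfl⟩
  simpa [Equiv.eq_symm_apply] using hff a

theorem two_mul_ncard_edgeSet_apexCyclesMatching
    (hff : ∀ a, f (f a) ≠ a) (hg : ∀ a, g a ≠ a) (hgg : Function.Involutive g)
    (hfg : ∀ a, f a ≠ g a) (hgf : ∀ a, f.symm a ≠ g a) :
    2 * (apexCyclesMatching f g).edgeSet.ncard = 5 * Fintype.card S := by
  classical
  rw [← coe_edgeFinset, Set.ncard_coe_finset, ← sum_degrees_eq_twice_card_edges,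
    Fintype.sum_option, apexCyclesMatching_degree_none,
    sum_congr rfl fun a _ => apexCyclesMatching_degree_some hff hg hgg hfg hgf a, sum_const,
    card_univ, smul_eq_mul]
  ring

end SimpleGraph

/-- Internal disjointness of the paths follows once every internal vertex carries, as its label,
the edge of `H` whose path it lies on. -/
def SubdivModel.ofLabel {VH VG : Type*} {H : SimpleGraph VH} {G : SimpleGraph VG}
    (nail : VH → VG) (nail_inj : Function.Injective nail)
    (path : ∀ u v, H.Adj u v → G.Walk (nail u) (nail v))
    (path_isPath : ∀ u v h, (path u v h).IsPath)
    (path_symm : ∀ u v h, path v u h.symm = (path u v h).reverse)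
    (label : VG → Option (Sym2 VH)) (label_nail : ∀ x, label (nail x) = none)
    (mem_support : ∀ u v h, ∀ w ∈ (path u v h).support,
      w = nail u ∨ w = nail v ∨ label w = some s(u, v)) :
    SubdivModel H G where
  nail := nail
  nail_inj := nail_inj
  path := path
  path_isPath := path_isPath
  path_symm := path_symm
  internal_not_nail u v h w hw hu hv x hx := by
    rcases mem_support u v h w hw with h1 | h1 | hl
    · exact hu h1
    · exact hv h1
    · simp [hx, label_nail] at hl
  paths_disjoint u v h u' v' h' hne w hw hw' := by
    have endpoint {a b a' b' : VH} (hab : H.Adj a b) (hab' : H.Adj a' b')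
        (hne : s(a, b) ≠ s(a', b')) (hw : w ∈ (path a b hab).support)
        (hw' : w ∈ (path a' b' hab').support) : w = nail a ∨ w = nail b := by
      rcases mem_support a b hab w hw with h1 | h1 | hl
      · exact .inl h1
      · exact .inr h1
      rcases mem_support a' b' hab' w hw' with h2 | h2 | hl'
      · simp [h2, label_nail] at hl
      · simp [h2, label_nail] at hl
      · exact absurd (Option.some.inj (hl.symm.trans hl')) hne
    exact ⟨endpoint h h' hne hw hw', endpoint h' h hne.symm hw' hw⟩

theorem AppearsAsSubdivision.isShallowTopMinor {k : ℕ} {VH VG : Type*} {H : SimpleGraph VH}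
    {G : SimpleGraph VG} (h : AppearsAsSubdivision k H G) : IsShallowTopMinor k H G :=
  let ⟨M, hM⟩ := h
  ⟨M, fun u v huv => (hM u v huv).le⟩

-- lets `simp` compare vertices of `G₂(ψ)` through constructor injectivity
attribute [reducible] G2PsiV

namespace PosCnf

variable {p m : ℕ} (ψ : PosCnf p m)

instance : DecidableEq ψ.Occ :=
  inferInstanceAs (DecidableEq {q : Fin m × Fin p // q.2 ∈ ψ.clause q.1})

instance : Fintype ψ.Occ :=
  inferInstanceAs (Fintype {q : Fin m × Fin p // q.2 ∈ ψ.clause q.1})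

theorem three_le_card_occ (v : Fin p) : 3 ≤ #{o : ψ.Occ | o.1.2 = v} :=
  (ψ.freq v).trans <| card_le_card_of_surjOn (fun o => o.1.1) fun i hi =>
    ⟨⟨(i, v), (mem_filter.1 hi).2⟩, mem_coe.2 (mem_filter.2 ⟨mem_univ _, rfl⟩), rfl⟩

abbrev FalseOcc (σ : Fin p → Bool) : Type := {o : ψ.Occ // σ o.1.2 = false}

variable {ψ} {σ : Fin p → Bool}

theorem card_clause_filter_false (hσ : ψ.Sat1in3 σ) (i : Fin m) :
    #{x ∈ ψ.clause i | σ x = false} = 2 := by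
  have := card_filter_add_card_filter_not (s := ψ.clause i) (fun x => σ x = true)
  simp only [hσ i, ψ.card_eq i, Bool.not_eq_true] at this
  omega

theorem card_falseOcc_clause (hσ : ψ.Sat1in3 σ) (i : Fin m) :
    #{a : ψ.FalseOcc σ | a.1.1.1 = i} = 2 := by
  rw [← card_clause_filter_false hσ i]
  refine card_bij (fun a _ => a.1.1.2) (fun a ha => ?_) (fun a ha b hb hab => ?_) fun x hx => ?_
  · rw [mem_filter_univ] at ha
    exact mem_filter.2 ⟨ha ▸ a.1.2, a.2⟩
  · rw [mem_filter_univ] at ha hb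
    exact Subtype.ext (Subtype.ext (Prod.ext (ha.trans hb.symm) hab))
  · rw [mem_filter] at hx
    exact ⟨⟨⟨(i, x), hx.1⟩, hx.2⟩, by simp, rfl⟩

theorem card_falseOcc (hσ : ψ.Sat1in3 σ) : Fintype.card (ψ.FalseOcc σ) = 2 * m := by
  rw [← card_univ, card_eq_sum_card_fiberwise (f := fun a => a.1.1.1) (t := univ) (by simp)]
  simp [card_falseOcc_clause hσ, mul_comm]

noncomputable def falsePartner (hσ : ψ.Sat1in3 σ) : ψ.FalseOcc σ → ψ.FalseOcc σ :=
  fiberPartner (card_falseOcc_clause hσ)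

theorem falsePartner_ne (hσ : ψ.Sat1in3 σ) (a : ψ.FalseOcc σ) : falsePartner hσ a ≠ a :=
  fiberPartner_ne _ a

theorem clause_falsePartner (hσ : ψ.Sat1in3 σ) (a : ψ.FalseOcc σ) :
    (falsePartner hσ a).1.1.1 = a.1.1.1 :=
  fiberPartner_fiber (card_falseOcc_clause hσ) a

theorem falsePartner_involutive (hσ : ψ.Sat1in3 σ) : Function.Involutive (falsePartner hσ) :=
  fiberPartner_involutive _

theorem var_falsePartner_ne (hσ : ψ.Sat1in3 σ) (a : ψ.FalseOcc σ) :
    (falsePartner hσ a).1.1.2 ≠ a.1.1.2 := fun h =>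
  falsePartner_ne hσ a <| Subtype.ext <| Subtype.ext <| Prod.ext (clause_falsePartner hσ a) h

end PosCnf

namespace CycleData

variable {p m : ℕ} {ψ : PosCnf p m} {succ : Equiv.Perm ψ.Occ}

theorem apply_apply_ne (hsucc : CycleData ψ succ) (o : ψ.Occ) : succ (succ o) ≠ o := by
  intro h
  have hsub : ({x | x.1.2 = o.1.2} : Finset ψ.Occ) ⊆ {o, succ o} := fun x hx => by
    simpa using (hsucc.2 o x (mem_filter.1 hx).2.symm).eq_or_eq_apply_of_apply_apply_eq h
  have := (ψ.three_le_card_occ o.1.2).trans ((card_le_card hsub).trans card_le_two)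
  omega

theorem apply_ne (hsucc : CycleData ψ succ) (o : ψ.Occ) : succ o ≠ o :=
  fun h => hsucc.apply_apply_ne o (by rw [h, h])

def falseSucc (hsucc : CycleData ψ succ) (σ : Fin p → Bool) : Equiv.Perm (ψ.FalseOcc σ) :=
  succ.subtypePerm fun o => by rw [hsucc.1 o]

variable {σ : Fin p → Bool}

theorem falseSucc_apply_apply_ne (hsucc : CycleData ψ succ) (a : ψ.FalseOcc σ) :
    hsucc.falseSucc σ (hsucc.falseSucc σ a) ≠ a :=
  fun h => hsucc.apply_apply_ne a.1 (congrArg Subtype.val h)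

theorem var_falseSucc (hsucc : CycleData ψ succ) (a : ψ.FalseOcc σ) :
    (hsucc.falseSucc σ a).1.1.2 = a.1.1.2 :=
  hsucc.1 a.1

theorem var_falseSucc_symm (hsucc : CycleData ψ succ) (a : ψ.FalseOcc σ) :
    ((hsucc.falseSucc σ).symm a).1.1.2 = a.1.1.2 := by
  conv_rhs => rw [← (hsucc.falseSucc σ).apply_symm_apply a]
  exact (hsucc.var_falseSucc _).symm

end CycleData

namespace G2Psi

open SimpleGraph

variable {p m : ℕ} (ψ : PosCnf p m) (succ : Equiv.Perm ψ.Occ)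

def white (o : ψ.Occ) : G2PsiV ψ := some (.inl o)

def gray (o : ψ.Occ) : G2PsiV ψ := some (.inr (.inl o))

def black (o : ψ.Occ) (apex : Bool) (k : Fin 2) : G2PsiV ψ := some (.inr (.inr (o, apex, k)))

theorem adj_apex_black (o : ψ.Occ) : (G2Psi ψ succ).Adj none (black ψ o true 0) := by
  simp [G2Psi, black]

theorem adj_black_black (o : ψ.Occ) (apex : Bool) :
    (G2Psi ψ succ).Adj (black ψ o apex 0) (black ψ o apex 1) := by
  cases apex <;> simp [G2Psi, black]

theorem adj_black_white (o : ψ.Occ) : (G2Psi ψ succ).Adj (black ψ o true 1) (white ψ o) := by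
  simp [G2Psi, black, white]

theorem adj_white_black (o : ψ.Occ) : (G2Psi ψ succ).Adj (white ψ o) (black ψ o false 0) := by
  simp [G2Psi, black, white]

theorem adj_black_white_succ (o : ψ.Occ) :
    (G2Psi ψ succ).Adj (black ψ o false 1) (white ψ (succ o)) := by
  simp [G2Psi, black, white]

theorem adj_gray_white (o : ψ.Occ) : (G2Psi ψ succ).Adj (gray ψ o) (white ψ o) := by
  simp [G2Psi, gray, white]

theorem adj_gray_gray {o o' : ψ.Occ} (hcl : o.1.1 = o'.1.1) (hne : o ≠ o') :
    (G2Psi ψ succ).Adj (gray ψ o) (gray ψ o') := by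
  simp [G2Psi, gray, hcl, hne]

def apexWalk (o : ψ.Occ) : (G2Psi ψ succ).Walk none (white ψ o) :=
  .cons (adj_apex_black ψ succ o) <| .cons (adj_black_black ψ succ o true) <|
    .cons (adj_black_white ψ succ o) .nil

def cycleWalk (o o' : ψ.Occ) (h : o' = succ o) : (G2Psi ψ succ).Walk (white ψ o) (white ψ o') :=
  .cons (adj_white_black ψ succ o) <| .cons (adj_black_black ψ succ o false) <|
    .cons (h ▸ adj_black_white_succ ψ succ o) .nil

def clauseWalk (o o' : ψ.Occ) (hcl : o.1.1 = o'.1.1) (hne : o ≠ o') :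
    (G2Psi ψ succ).Walk (white ψ o) (white ψ o') :=
  .cons (adj_gray_white ψ succ o).symm <| .cons (adj_gray_gray ψ succ hcl hne) <|
    .cons (adj_gray_white ψ succ o') .nil

theorem apexWalk_isPath (o : ψ.Occ) : (apexWalk ψ succ o).IsPath := by
  simp only [apexWalk, Walk.isPath_def, Walk.support_cons, Walk.support_nil]
  simp [black, white]

theorem cycleWalk_isPath {o o' : ψ.Occ} (h : o' = succ o) (hne : o ≠ o') :
    (cycleWalk ψ succ o o' h).IsPath := by
  simp only [cycleWalk, Walk.isPath_def, Walk.support_cons, Walk.support_nil]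
  simp [black, white, hne]

theorem clauseWalk_isPath {o o' : ψ.Occ} (hcl : o.1.1 = o'.1.1) (hne : o ≠ o') :
    (clauseWalk ψ succ o o' hcl hne).IsPath := by
  simp only [clauseWalk, Walk.isPath_def, Walk.support_cons, Walk.support_nil]
  simp [gray, white, hne]

section Model

variable {ψ succ} (hsucc : CycleData ψ succ) {σ : Fin p → Bool} (hσ : ψ.Sat1in3 σ)

noncomputable abbrev minorGraph : SimpleGraph (Option (ψ.FalseOcc σ)) :=
  apexCyclesMatching (hsucc.falseSucc σ) (PosCnf.falsePartner hσ)

theorem minorGraph_adj_some_iff {a b : ψ.FalseOcc σ} :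
    (minorGraph hsucc hσ).Adj (some a) (some b) ↔
      b = hsucc.falseSucc σ a ∨ a = hsucc.falseSucc σ b ∨ b = PosCnf.falsePartner hσ a :=
  apexCyclesMatching_adj_some_iff hsucc.falseSucc_apply_apply_ne
    (PosCnf.falsePartner_ne hσ) (PosCnf.falsePartner_involutive hσ)

theorem ncard_edgeSet_minorGraph : (minorGraph hsucc hσ).edgeSet.ncard = 5 * m := by
  have : 2 * (minorGraph hsucc hσ).edgeSet.ncard = 5 * (2 * m) := by
    rw [← PosCnf.card_falseOcc hσ]
    exact two_mul_ncard_edgeSet_apexCyclesMatching hsucc.falseSucc_apply_apply_ne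
      (PosCnf.falsePartner_ne hσ) (PosCnf.falsePartner_involutive hσ)
      (fun a h => PosCnf.var_falsePartner_ne hσ a (by rw [← h, hsucc.var_falseSucc]))
      (fun a h => PosCnf.var_falsePartner_ne hσ a (by rw [← h, hsucc.var_falseSucc_symm]))
  omega

abbrev modelNail : Option (ψ.FalseOcc σ) → G2PsiV ψ
  | none => none
  | some a => white ψ a.1

theorem modelNail_injective : Function.Injective (modelNail (ψ := ψ) (σ := σ)) := by
  rintro (_ | a) (_ | b) h <;> simp_all [modelNail, white, Subtype.ext_iff]

noncomputable def modelPath : ∀ u v, (minorGraph hsucc hσ).Adj u v →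
    (G2Psi ψ succ).Walk (modelNail u) (modelNail v)
  | none, none, h => (h.ne rfl).elim
  | none, some a, _ => apexWalk ψ succ a.1
  | some a, none, _ => (apexWalk ψ succ a.1).reverse
  | some a, some b, h =>
    if h₁ : b = hsucc.falseSucc σ a then cycleWalk ψ succ a.1 b.1 (congrArg Subtype.val h₁)
    else if h₂ : a = hsucc.falseSucc σ b then
      (cycleWalk ψ succ b.1 a.1 (congrArg Subtype.val h₂)).reverse
    else
      have hb : b = PosCnf.falsePartner hσ a :=
        ((minorGraph_adj_some_iff hsucc hσ).1 h).resolve_left h₁ |>.resolve_left h₂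
      clauseWalk ψ succ a.1 b.1 (by rw [hb, PosCnf.clause_falsePartner])
        (by subst hb; exact fun e => PosCnf.falsePartner_ne hσ a (Subtype.ext e).symm)

theorem modelPath_isPath (u v : Option (ψ.FalseOcc σ)) (h : (minorGraph hsucc hσ).Adj u v) :
    (modelPath hsucc hσ u v h).IsPath := by
  match u, v with
  | none, none => exact (h.ne rfl).elim
  | none, some a => exact apexWalk_isPath ψ succ a.1
  | some a, none => exact (apexWalk_isPath ψ succ a.1).reverse
  | some a, some b =>
    rw [modelPath]
    split_ifs with h₁ h₂
    · exact cycleWalk_isPath ψ succ _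
        fun e => hsucc.apply_ne a.1 (e.trans (congrArg Subtype.val h₁)).symm
    · exact (cycleWalk_isPath ψ succ _
        fun e => hsucc.apply_ne b.1 (e.trans (congrArg Subtype.val h₂)).symm).reverse
    · exact clauseWalk_isPath ψ succ _ _

theorem modelPath_symm (u v : Option (ψ.FalseOcc σ)) (h : (minorGraph hsucc hσ).Adj u v) :
    modelPath hsucc hσ v u h.symm = (modelPath hsucc hσ u v h).reverse := by
  match u, v with
  | none, none => exact (h.ne rfl).elim
  | none, some a => rfl
  | some a, none => exact (Walk.reverse_reverse _).symm
  | some a, some b =>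
    rw [modelPath, modelPath]
    split_ifs with h₁ h₂ h₃
    · exact absurd (h₂.trans (congrArg _ h₁)).symm
        fun e => hsucc.apply_apply_ne b.1 (congrArg Subtype.val e)
    · exact (Walk.reverse_reverse _).symm
    · rfl
    · rfl

theorem modelPath_length (u v : Option (ψ.FalseOcc σ)) (h : (minorGraph hsucc hσ).Adj u v) :
    (modelPath hsucc hσ u v h).length = 3 := by
  match u, v with
  | none, none => exact (h.ne rfl).elim
  | none, some a => rfl
  | some a, none => simp [modelPath, apexWalk]
  | some a, some b =>
    rw [modelPath]
    split_ifs <;> simp [cycleWalk, clauseWalk]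

noncomputable def modelLabel : G2PsiV ψ → Option (Sym2 (Option (ψ.FalseOcc σ)))
  | some (.inr (.inl o)) =>
    if h : σ o.1.2 = false then some s(some ⟨o, h⟩, some (PosCnf.falsePartner hσ ⟨o, h⟩))
    else none
  | some (.inr (.inr (o, true, _))) =>
    if h : σ o.1.2 = false then some s(none, some ⟨o, h⟩) else none
  | some (.inr (.inr (o, false, _))) =>
    if h : σ o.1.2 = false then some s(some ⟨o, h⟩, some (hsucc.falseSucc σ ⟨o, h⟩))
    else none
  | _ => none

theorem modelLabel_modelNail (x : Option (ψ.FalseOcc σ)) :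
    modelLabel hsucc hσ (modelNail x) = none := by
  cases x <;> rfl

theorem mem_support_modelPath (u v : Option (ψ.FalseOcc σ)) (h : (minorGraph hsucc hσ).Adj u v)
    (w : G2PsiV ψ) (hw : w ∈ (modelPath hsucc hσ u v h).support) :
    w = modelNail u ∨ w = modelNail v ∨ modelLabel hsucc hσ w = some s(u, v) := by
  match u, v with
  | none, none => exact (h.ne rfl).elim
  | none, some a =>
    simp only [modelPath, apexWalk, Walk.support_cons, Walk.support_nil, List.mem_cons,
      List.not_mem_nil, or_false] at hw
    rcases hw with rfl | rfl | rfl | rfl <;> simp [modelLabel, black, a.2]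
  | some a, none =>
    simp only [modelPath, apexWalk, Walk.support_reverse, List.mem_reverse, Walk.support_cons,
      Walk.support_nil, List.mem_cons, List.not_mem_nil, or_false] at hw
    rcases hw with rfl | rfl | rfl | rfl <;> simp [modelLabel, black, a.2]
  | some a, some b =>
    rw [modelPath] at hw
    split_ifs at hw with h₁ h₂
    · simp only [cycleWalk, Walk.support_cons, Walk.support_nil, List.mem_cons,
        List.not_mem_nil, or_false] at hw
      rcases hw with rfl | rfl | rfl | rfl <;> simp [modelLabel, black, a.2, h₁]
    · simp only [cycleWalk, Walk.support_reverse, List.mem_reverse, Walk.support_cons,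
        Walk.support_nil, List.mem_cons, List.not_mem_nil, or_false] at hw
      rcases hw with rfl | rfl | rfl | rfl <;> simp [modelLabel, black, b.2, h₂, Sym2.eq_swap]
    · have hb : b = PosCnf.falsePartner hσ a :=
        ((minorGraph_adj_some_iff hsucc hσ).1 h).resolve_left h₁ |>.resolve_left h₂
      simp only [clauseWalk, Walk.support_cons, Walk.support_nil, List.mem_cons,
        List.not_mem_nil, or_false] at hw
      subst hb
      rcases hw with rfl | rfl | rfl | rfl <;>
        simp [modelLabel, gray, a.2, (PosCnf.falsePartner hσ a).2, Sym2.eq_swap,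
          PosCnf.falsePartner_involutive hσ a]

theorem appearsAsSubdivision_minorGraph :
    AppearsAsSubdivision 2 (minorGraph hsucc hσ) (G2Psi ψ succ) :=
  ⟨.ofLabel _ modelNail_injective (modelPath hsucc hσ) (modelPath_isPath hsucc hσ)
    (modelPath_symm hsucc hσ) (modelLabel hsucc hσ) (modelLabel_modelNail hsucc hσ)
    (mem_support_modelPath hsucc hσ), modelPath_length hsucc hσ⟩

end Model

end G2Psi

/-- If `ψ` has a 1-in-3 satisfying assignment, then some graph `H` with
exactly `2m+1` vertices and `5m` edges appears as a `2`-subdivision in `G₂(ψ)`; in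
particular, `G₂(ψ)` has a topological minor at depth `1` of density `5m/(2m+1)`. -/
theorem stmt_9 {p m : ℕ} (ψ : PosCnf p m) (succ : Equiv.Perm ψ.Occ)
    (hsucc : CycleData ψ succ) (hsat : ∃ σ, ψ.Sat1in3 σ) :
    (∃ (VH : Type) (H : SimpleGraph VH),
      AppearsAsSubdivision 2 H (G2Psi ψ succ) ∧
      Nat.card VH = 2 * m + 1 ∧ H.edgeSet.ncard = 5 * m) ∧
    (∃ (VH : Type) (H : SimpleGraph VH),
      IsShallowTopMinor 2 H (G2Psi ψ succ) ∧
      graphDensity H = (5 * m : ℚ) / (2 * m + 1)) := by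
  obtain ⟨σ, hσ⟩ := hsat
  have hsub := G2Psi.appearsAsSubdivision_minorGraph hsucc hσ
  have hV : Nat.card (Option (ψ.FalseOcc σ)) = 2 * m + 1 := by
    rw [Nat.card_eq_fintype_card, Fintype.card_option, PosCnf.card_falseOcc hσ]
  have hE := G2Psi.ncard_edgeSet_minorGraph hsucc hσ
  refine ⟨⟨_, _, hsub, hV, hE⟩, ⟨_, _, hsub.isShallowTopMinor, ?_⟩⟩
  rw [graphDensity, hE, hV]
  push_cast
  rfl
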